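/- Let φ : Γ → Γ' be a harmonic morphism of M-metrised graphs and D' ∈ Div(Γ'). Then deg(φ*(D')) = deg(φ) · deg(D'). -/

import Mathlib

noncomputable section
open scoped Classical

/-! ### Groupification of a cancellative additive commutative monoid -/

variable (M : Type) [AddCancelCommMonoid M]

def gpSetoid : Setoid (M × M) where
  r p q := p.1 + q.2 = q.1 + p.2
  iseqv := by
    refine ⟨fun p => rfl, fun h => h.symm, fun {p q r} h1 h2 => ?_⟩
    have key : (p.1 + r.2) + (q.1 + q.2) = (r.1 + p.2) + (q.1 + q.2) := by
      calc (p.1 + r.2) + (q.1 + q.2) = (p.1 + q.2) + (q.1 + r.2) := by abel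
        _ = (q.1 + p.2) + (r.1 + q.2) := by rw [h1, h2]
        _ = (r.1 + p.2) + (q.1 + q.2) := by abel
    exact add_right_cancel key

/-- The groupification `M^gp` of a cancellative commutative monoid `M`:
the quotient of `M × M` by `(a,b) ~ (c,d) ↔ a + d = c + b` (think of `(a,b)` as `a - b`). -/
def Gp : Type := Quotient (gpSetoid M)

namespace Gp

variable {M}

/-- The element `a - b` of `M^gp`. -/
def mk (a b : M) : Gp M := Quotient.mk (gpSetoid M) (a, b)

instance : Zero (Gp M) := ⟨mk 0 0⟩

instance : Add (Gp M) :=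
  ⟨Quotient.map₂ (fun p q => (p.1 + q.1, p.2 + q.2)) (by
    intro p p' hp q q' hq
    show (p.1 + q.1) + (p'.2 + q'.2) = (p'.1 + q'.1) + (p.2 + q.2)
    calc (p.1 + q.1) + (p'.2 + q'.2) = (p.1 + p'.2) + (q.1 + q'.2) := by abel
      _ = (p'.1 + p.2) + (q'.1 + q.2) := by rw [hp, hq]
      _ = (p'.1 + q'.1) + (p.2 + q.2) := by abel)⟩

instance : Neg (Gp M) :=
  ⟨Quotient.map (fun p => (p.2, p.1)) (by
    intro p p' hp
    show p.2 + p'.1 = p'.2 + p.1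
    calc p.2 + p'.1 = p'.1 + p.2 := by abel
      _ = p.1 + p'.2 := hp.symm
      _ = p'.2 + p.1 := by abel)⟩

lemma mk_add_mk (a b c d : M) : mk a b + mk c d = mk (a + c) (b + d) := rfl
lemma neg_mk (a b : M) : -(mk a b) = mk b a := rfl
lemma zero_def : (0 : Gp M) = mk 0 0 := rfl

instance : AddCommGroup (Gp M) where
  add := (· + ·)
  zero := 0
  neg := Neg.neg
  nsmul := nsmulRec
  zsmul := zsmulRec
  add_assoc := by
    intro a b c
    induction a using Quotient.inductionOn with | h a =>
    induction b using Quotient.inductionOn with | h b =>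
    induction c using Quotient.inductionOn with | h c =>
    exact Quotient.sound (by
      show ((a.1 + b.1) + c.1) + (a.2 + (b.2 + c.2)) = (a.1 + (b.1 + c.1)) + ((a.2 + b.2) + c.2)
      abel)
  zero_add := by
    intro a
    induction a using Quotient.inductionOn with | h a =>
    exact Quotient.sound (by
      show (0 + a.1) + a.2 = a.1 + (0 + a.2)
      abel)
  add_zero := by
    intro a
    induction a using Quotient.inductionOn with | h a =>
    exact Quotient.sound (by
      show (a.1 + 0) + a.2 = a.1 + (a.2 + 0)
      abel)
  neg_add_cancel := by
    intro a
    induction a using Quotient.inductionOn with | h a =>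
    exact Quotient.sound (by
      show (a.2 + a.1) + 0 = 0 + (a.1 + a.2)
      abel)
  add_comm := by
    intro a b
    induction a using Quotient.inductionOn with | h a =>
    induction b using Quotient.inductionOn with | h b =>
    exact Quotient.sound (by
      show (a.1 + b.1) + (b.2 + a.2) = (b.1 + a.1) + (a.2 + b.2)
      abel)

/-- The canonical map `M → M^gp`. -/
def of : M →+ Gp M where
  toFun a := mk a 0
  map_zero' := rfl
  map_add' := by
    intro a b
    exact (Quotient.sound (by
      show (a + b) + (0 + 0) = (a + b) + 0
      abel) : mk (a + b) 0 = mk (a + b) (0 + 0))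

/-- Functoriality of groupification: a monoid homomorphism `f : M →+ N` induces
`f^gp : M^gp →+ N^gp`. -/
def map {N : Type} [AddCancelCommMonoid N] (f : M →+ N) : Gp M →+ Gp N where
  toFun := Quotient.map (fun p => (f p.1, f p.2)) (by
    intro p p' hp
    show f p.1 + f p'.2 = f p'.1 + f p.2
    rw [← f.map_add, ← f.map_add, hp])
  map_zero' := by
    show mk (f 0) (f 0) = mk 0 0
    rw [f.map_zero]
  map_add' := by
    intro a b
    induction a using Quotient.inductionOn with | h a =>
    induction b using Quotient.inductionOn with | h b =>
    show mk (f (a.1 + b.1)) (f (a.2 + b.2)) = mk (f a.1 + f b.1) (f a.2 + f b.2)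
    rw [f.map_add, f.map_add]

end Gp

/-- Sharpness: the only invertible element of `M` is `0`. -/
def Sharp : Prop := ∀ a b : M, a + b = 0 → a = 0

/-! ### Monoid-metrised graphs -/

/-- A graph (Definition 2.3 of the paper) together with a metric taking values in the
monoid `M`: `X` is the finite set of vertices and half-edges, `r` sends an element to its
root vertex, `i` is the pairing involution on half-edges, and `l` assigns a length in `M`
to every half-edge (and `0` to every vertex). -/
structure MGraph where
  X : Type
  [finX : Fintype X]
  r : X → X
  i : X → X
  r_idem : ∀ x, r (r x) = r x
  i_invol : ∀ x, i (i x) = x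
  fix_iff : ∀ x, i x = x ↔ r x = x
  l : X → M
  l_i : ∀ x, l (i x) = l x
  l_zero_iff : ∀ x, l x = 0 ↔ i x = x

attribute [instance] MGraph.finX

namespace MGraph

variable {M} (G : MGraph M)

/-- `x` is a vertex iff it is fixed by the involution. -/
def IsVertex (x : G.X) : Prop := G.i x = x

/-- `x` is a half-edge iff it is not fixed by the involution. -/
def IsHalfEdge (x : G.X) : Prop := G.i x ≠ x

/-- The vertex set of `G`. -/
abbrev V : Type := { x : G.X // G.IsVertex x }

/-- The root of any element of `X` is a vertex. -/
def rv (x : G.X) : G.V := ⟨G.r x, (G.fix_iff (G.r x)).mpr (G.r_idem x)⟩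

/-- Two vertices are adjacent if some edge joins them. -/
def Adj (u v : G.V) : Prop := ∃ x, G.IsHalfEdge x ∧ G.rv x = u ∧ G.rv (G.i x) = v

/-- `G` is connected. (All graphs in the paper are assumed connected.) -/
def IsConnected : Prop := Nonempty G.X ∧ ∀ u v : G.V, Relation.ReflTransGen G.Adj u v

/-- The degree of a divisor `D : V → ℤ`. -/
def degD (D : G.V → ℤ) : ℤ := ∑ v, D v

/-- A divisor is effective if all its coefficients are nonnegative. -/
def Effective (D : G.V → ℤ) : Prop := ∀ v, 0 ≤ D v

/-- `g : V → M^gp` is piecewise linear if, along every half-edge, the difference of the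
values of `g` at the two endpoints is an integer multiple of the length of that edge. -/
def IsPL (g : G.V → Gp M) : Prop :=
  ∀ x, G.IsHalfEdge x → ∃ n : ℤ, g (G.rv x) - g (G.rv (G.i x)) = n • Gp.of (G.l x)

/-- The (outgoing) integer slope of `g` along the half-edge `x`. -/
def slope (g : G.V → Gp M) (x : G.X) : ℤ :=
  if h : ∃ n : ℤ, g (G.rv x) - g (G.rv (G.i x)) = n • Gp.of (G.l x) then h.choose else 0

/-- The Laplacian of a piecewise linear function. -/
def lap (g : G.V → Gp M) : G.V → ℤ :=
  fun v => ∑ x : G.X, if G.IsHalfEdge x ∧ G.r x = v.val then G.slope g x else 0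

/-- Principal divisors: those of the form `Δ(g)` for a piecewise linear `g`. -/
def IsPrincipal (D : G.V → ℤ) : Prop := ∃ g, G.IsPL g ∧ G.lap g = D

/-- The rank of a divisor `D`:
`r(D) = max { k : for every effective divisor F of degree k, |D - F| ≠ ∅ }`. -/
def rank (D : G.V → ℤ) : ℤ :=
  sSup {k : ℤ | ∀ F : G.V → ℤ, G.Effective F → G.degD F = k →
    ∃ E : G.V → ℤ, G.Effective E ∧ G.IsPrincipal (D - F - E)}

/-- The divisorial gonality: the minimal degree of a divisor of rank at least 1. -/
def dgon : ℤ := sInf {d : ℤ | ∃ D : G.V → ℤ, 1 ≤ G.rank D ∧ G.degD D = d}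

end MGraph


/-! ### Morphisms of monoid-metrised graphs -/

namespace MGraph

variable {M : Type} [AddCancelCommMonoid M]

/-- A morphism of `M`-metrised graphs (Definition 3.1 of the paper): vertices map to
vertices; a half-edge mapping to a half-edge respects roots and the target length is an
integer multiple of the source length; a half-edge collapsed to a vertex has both of its
endpoints mapped to that vertex. -/
structure Hom (G G' : MGraph M) where
  f : G.X → G'.X
  vtx : ∀ x, G.IsVertex x → G'.IsVertex (f x)
  edge : ∀ x, G.IsHalfEdge x → G'.IsHalfEdge (f x) →
    f (G.r x) = G'.r (f x) ∧ f (G.r (G.i x)) = G'.r (G'.i (f x)) ∧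
      ∃ n : ℕ, G'.l (f x) = n • G.l x
  contr : ∀ x, G.IsHalfEdge x → G'.IsVertex (f x) →
    f (G.r x) = f x ∧ f (G.r (G.i x)) = f x

namespace Hom

variable {G G' : MGraph M} (φ : Hom G G')

/-- The induced map on vertices. -/
def vmap (v : G.V) : G'.V := ⟨φ.f v.val, φ.vtx v.val v.property⟩

/-- The slope `μ_φ(x) = l'(φ(x)) / l(x)` of `φ` along a half-edge `x` (zero if `φ`
collapses `x` to a vertex). -/
def mu (x : G.X) : ℕ :=
  if h : G'.IsHalfEdge (φ.f x) ∧ ∃ n : ℕ, G'.l (φ.f x) = n • G.l x then h.2.choose else 0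

/-- The multiplicity `m_{φ,v}(e') = ∑_{x ∈ H_v, φ(x) = e'} μ_φ(x)` of a half-edge `e'` of
`G'` at a vertex `v` of `G`. -/
def multAt (v : G.V) (e' : G'.X) : ℕ :=
  ∑ x : G.X, if G.IsHalfEdge x ∧ G.r x = v.val ∧ φ.f x = e' then φ.mu x else 0

/-- `φ` is harmonic (= horizontally conformal): for every vertex `v`, all half-edges of
`G'` rooted at `φ(v)` have the same multiplicity at `v`. -/
def Harmonic : Prop :=
  ∀ (v : G.V) (e' f' : G'.X), G'.IsHalfEdge e' → G'.IsHalfEdge f' →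
    G'.r e' = φ.f v.val → G'.r f' = φ.f v.val → φ.multAt v e' = φ.multAt v f'

/-- The horizontal multiplicity `m_φ(v)` of a vertex (the common value of `m_{φ,v}(e')`
over half-edges `e'` rooted at `φ(v)`; zero if there are none). -/
def mV (v : G.V) : ℕ :=
  if h : ∃ e', G'.IsHalfEdge e' ∧ G'.r e' = φ.f v.val then φ.multAt v h.choose else 0

/-- `φ` is non-degenerate if every vertex has positive horizontal multiplicity. -/
def Nondeg : Prop := ∀ v : G.V, 0 < φ.mV v

/-- The multiplicity `m_φ(e') = ∑_{v : φ(v) = r'(e')} m_{φ,v}(e')` of a half-edge of `G'`. -/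
def mE (e' : G'.X) : ℕ :=
  ∑ v : G.V, if φ.f v.val = G'.r e' then φ.multAt v e' else 0

/-- The degree of a harmonic morphism: `deg(φ) = m_φ(e')` for any half-edge `e'` of `G'`. -/
def deg : ℕ := if h : ∃ e', G'.IsHalfEdge e' then φ.mE h.choose else 0

/-- The pullback of divisors: `φ*(D') = ∑_v D'(φ(v)) · m_φ(v) · [v]`. -/
def pullback (D' : G'.V → ℤ) : G.V → ℤ :=
  fun v => D' (φ.vmap v) * (φ.mV v : ℤ)

/-- The pushforward of divisors: `φ_*(D) = ∑_v D(v) · [φ(v)]`. -/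
def pushforward (D : G.V → ℤ) : G'.V → ℤ :=
  fun v' => ∑ v : G.V, if φ.vmap v = v' then D v else 0

end Hom

/-- A cycle in `G`: a cyclic sequence of half-edges `e_0, …, e_k` in which consecutive
half-edges are consecutive (the far endpoint of each is the root of the next) and which
never immediately backtracks. -/
def HasCycle (G : MGraph M) : Prop :=
  ∃ (k : ℕ) (e : ZMod (k + 1) → G.X), (∀ j, G.IsHalfEdge (e j)) ∧
    (∀ j, G.r (G.i (e j)) = G.r (e (j + 1))) ∧ (∀ j, e (j + 1) ≠ G.i (e j))

/-- A tree is a connected graph with no cycles. -/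
def IsTree (G : MGraph M) : Prop := G.IsConnected ∧ ¬ G.HasCycle

/-- The geometric gonality of `G`: the minimal degree of a harmonic, non-degenerate
morphism from `G` onto an `M`-metrised tree, or `∞` if no such morphism exists. -/
def ggon (G : MGraph M) : ℕ∞ :=
  sInf {d : ℕ∞ | ∃ (T : MGraph M) (φ : Hom G T),
    T.IsTree ∧ φ.Harmonic ∧ φ.Nondeg ∧ (φ.deg : ℕ∞) = d}

end MGraph

/-!
Grouping the vertices of `Γ` by their image reduces the formula to `∑_{φ(v) = v'} m_φ(v) = deg φ`
for every vertex `v'`, and by harmonicity the left side is `m_φ(e')` for any half-edge `e'`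
rooted at `v'`. So `m_φ` has to be constant on the half-edges of the connected graph `Γ'`: it
depends only on the root, and `m_φ(e') = m_φ(i(e'))`. For the latter, `φ` may send the two
halves of an edge onto different parallel edges, so preimages are counted with weights:
`∑ m_φ(f') · l(e') / l(f')` over the half-edges `f'` from `r(e')` to `r(i(e'))` equals
`∑ l(e') / l(x)` over the half-edges `x` above them, and this sum is invariant under `i`.
Sharpness of `M` makes these ratios well defined in `ℚ`.
-/

section LengthRatio

variable {M : Type} [AddCancelCommMonoid M]

theorem Sharp.nsmul_eq_zero (hsharp : Sharp M) {z : M} (hz : z ≠ 0) {k : ℕ}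
    (hk : k • z = 0) : k = 0 := by
  cases k with
  | zero => rfl
  | succ n => exact absurd (hsharp z (n • z) (by rwa [← succ_nsmul'])) hz

theorem Sharp.nsmul_left_injective (hsharp : Sharp M) {z : M} (hz : z ≠ 0) :
    Function.Injective (fun k : ℕ => k • z) := by
  suffices h : ∀ a b : ℕ, a ≤ b → a • z = b • z → a = b by
    intro a b hab
    rcases le_total a b with hle | hle
    · exact h a b hle hab
    · exact (h b a hle hab.symm).symm
  intro a b hle hab
  obtain ⟨c, rfl⟩ := Nat.exists_eq_add_of_le hle
  rw [add_nsmul, left_eq_add] at hab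
  rw [hsharp.nsmul_eq_zero hz hab, add_zero]

/-- `lengthRatio z m` is the rational number `z / m` when `z` and `m` are commensurable,
i.e. `a • z = b • m` for some positive `a, b`, and `0` otherwise. -/
def lengthRatio (z m : M) : ℚ :=
  if h : ∃ p : ℕ × ℕ, 0 < p.1 ∧ 0 < p.2 ∧ p.1 • z = p.2 • m then
    (h.choose.2 : ℚ) / h.choose.1 else 0

theorem lengthRatio_nonneg (z m : M) : 0 ≤ lengthRatio z m := by
  unfold lengthRatio
  split <;> positivity

theorem lengthRatio_eq (hsharp : Sharp M) {z m : M} (hz : z ≠ 0) {a b : ℕ} (ha : 0 < a)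
    (hb : 0 < b) (h : a • z = b • m) : lengthRatio z m = b / a := by
  have hex : ∃ p : ℕ × ℕ, 0 < p.1 ∧ 0 < p.2 ∧ p.1 • z = p.2 • m := ⟨(a, b), ha, hb, h⟩
  rw [lengthRatio, dif_pos hex]
  obtain ⟨ha', -, h'⟩ := hex.choose_spec
  set a' := hex.choose.1
  set b' := hex.choose.2
  rw [div_eq_div_iff (by positivity) (by positivity)]
  have : (b' * a) • z = (b * a') • z := by
    rw [mul_nsmul', h, mul_nsmul', h', ← mul_nsmul', ← mul_nsmul', mul_comm]
  exact_mod_cast hsharp.nsmul_left_injective hz this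

theorem lengthRatio_self (hsharp : Sharp M) {z : M} (hz : z ≠ 0) : lengthRatio z z = 1 := by
  simpa using lengthRatio_eq hsharp hz one_pos one_pos rfl

theorem natCast_mul_lengthRatio_nsmul (hsharp : Sharp M) {z m : M} (hz : z ≠ 0) {k : ℕ}
    (hk : 0 < k) : (k : ℚ) * lengthRatio z (k • m) = lengthRatio z m := by
  by_cases hcomm : ∃ p : ℕ × ℕ, 0 < p.1 ∧ 0 < p.2 ∧ p.1 • z = p.2 • m
  · obtain ⟨⟨a, b⟩, ha, hb, h⟩ := hcomm
    have hk' : (k * a) • z = b • k • m := by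
      rw [mul_nsmul', h, ← mul_nsmul', ← mul_nsmul', mul_comm]
    rw [lengthRatio_eq hsharp hz (Nat.mul_pos hk ha) hb hk', lengthRatio_eq hsharp hz ha hb h]
    push_cast
    field_simp
  · have hcomm' : ¬ ∃ p : ℕ × ℕ, 0 < p.1 ∧ 0 < p.2 ∧ p.1 • z = p.2 • (k • m) := by
      rintro ⟨⟨a, b⟩, ha, hb, h⟩
      exact hcomm ⟨(a, b * k), ha, Nat.mul_pos hb hk, by rw [mul_nsmul']; exact h⟩
    rw [lengthRatio, dif_neg hcomm', lengthRatio, dif_neg hcomm, mul_zero]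

end LengthRatio

namespace MGraph

variable {M : Type} [AddCancelCommMonoid M] {G : MGraph M}

theorem isHalfEdge_i_iff {x : G.X} : G.IsHalfEdge (G.i x) ↔ G.IsHalfEdge x := by
  simp only [IsHalfEdge, G.i_invol, ne_comm]

theorem IsHalfEdge.l_ne_zero {x : G.X} (hx : G.IsHalfEdge x) : G.l x ≠ 0 :=
  fun h => hx ((G.l_zero_iff x).mp h)

variable (G) in
def edgesBetween (u w : G.X) : Finset G.X :=
  Finset.univ.filter fun f => G.IsHalfEdge f ∧ G.r f = u ∧ G.r (G.i f) = w

theorem mem_edgesBetween {u w f : G.X} :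
    f ∈ G.edgesBetween u w ↔ G.IsHalfEdge f ∧ G.r f = u ∧ G.r (G.i f) = w := by
  simp [edgesBetween]

theorem i_mem_edgesBetween {u w f : G.X} :
    G.i f ∈ G.edgesBetween u w ↔ f ∈ G.edgesBetween w u := by
  simp only [mem_edgesBetween, isHalfEdge_i_iff, G.i_invol]
  tauto

theorem sum_edgesBetween_swap {β : Type*} [AddCommMonoid β] (u w : G.X) (g : G.X → β) :
    ∑ f ∈ G.edgesBetween w u, g f = ∑ f ∈ G.edgesBetween u w, g (G.i f) :=
  Finset.sum_nbij' G.i G.i (fun _ => i_mem_edgesBetween.mpr) (fun _ => i_mem_edgesBetween.mpr)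
    (fun f _ => G.i_invol f) (fun f _ => G.i_invol f) (fun f _ => by rw [G.i_invol])

theorem exists_isHalfEdge_r_eq (hG : G.IsConnected) (hH : ∃ e, G.IsHalfEdge e) (v : G.V) :
    ∃ e, G.IsHalfEdge e ∧ G.r e = v.val := by
  obtain ⟨e, he⟩ := hH
  rcases Relation.ReflTransGen.cases_head (hG.2 v (G.rv e)) with rfl | ⟨_, ⟨f, hf, rfl, -⟩, -⟩
  · exact ⟨e, he, rfl⟩
  · exact ⟨f, hf, rfl⟩

end MGraph

namespace MGraph.Hom

variable {M : Type} [AddCancelCommMonoid M] {G G' : MGraph M} (φ : Hom G G')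

theorem l_f_eq_mu_nsmul {x : G.X} (hx : G.IsHalfEdge x) (hfx : G'.IsHalfEdge (φ.f x)) :
    G'.l (φ.f x) = φ.mu x • G.l x := by
  have h : G'.IsHalfEdge (φ.f x) ∧ ∃ n : ℕ, G'.l (φ.f x) = n • G.l x :=
    ⟨hfx, (φ.edge x hx hfx).2.2⟩
  rw [mu, dif_pos h]
  exact h.2.choose_spec

theorem mu_pos {x : G.X} (hx : G.IsHalfEdge x) (hfx : G'.IsHalfEdge (φ.f x)) : 0 < φ.mu x := by
  refine Nat.pos_of_ne_zero fun h => hfx.l_ne_zero ?_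
  rw [φ.l_f_eq_mu_nsmul hx hfx, h, zero_nsmul]

theorem mu_mul_lengthRatio (hsharp : Sharp M) {z : M} (hz : z ≠ 0) {x : G.X}
    (hx : G.IsHalfEdge x) (hfx : G'.IsHalfEdge (φ.f x)) :
    (φ.mu x : ℚ) * lengthRatio z (G'.l (φ.f x)) = lengthRatio z (G.l x) := by
  rw [φ.l_f_eq_mu_nsmul hx hfx, natCast_mul_lengthRatio_nsmul hsharp hz (φ.mu_pos hx hfx)]

theorem mE_eq_sum_mu {f' : G'.X} (hf' : G'.IsHalfEdge f') :
    φ.mE f' = ∑ x with G.IsHalfEdge x ∧ φ.f x = f', φ.mu x := by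
  rw [← Finset.sum_fiberwise _ G.rv]
  refine Finset.sum_congr rfl fun v _ => ?_
  rw [multAt, ← Finset.sum_filter, Finset.filter_filter]
  split_ifs with hv
  · congr 1
    ext x
    simp only [Finset.mem_filter, Finset.mem_univ, true_and, rv, Subtype.ext_iff]
    tauto
  · refine (Finset.sum_eq_zero fun x hx => absurd ?_ hv).symm
    obtain ⟨⟨hxe, rfl⟩, rfl⟩ := (Finset.mem_filter.mp hx).2
    exact (φ.edge x hxe hf').1

theorem mE_eq_of_r_eq (hφ : φ.Harmonic) {e' f' : G'.X} (he' : G'.IsHalfEdge e')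
    (hf' : G'.IsHalfEdge f') (h : G'.r e' = G'.r f') : φ.mE e' = φ.mE f' := by
  refine Finset.sum_congr rfl fun v _ => ?_
  by_cases hv : φ.f v.val = G'.r e'
  · rw [if_pos hv, if_pos (h ▸ hv), hφ v e' f' he' hf' hv.symm (h ▸ hv).symm]
  · rw [if_neg hv, if_neg (h ▸ hv)]

def halfEdgesOver (E' : Finset G'.X) : Finset G.X :=
  Finset.univ.filter fun x => G.IsHalfEdge x ∧ φ.f x ∈ E'

theorem sum_mE_mul {E' : Finset G'.X} (hE' : ∀ f' ∈ E', G'.IsHalfEdge f') (g : G'.X → ℚ) :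
    ∑ f' ∈ E', (φ.mE f' : ℚ) * g f' = ∑ x ∈ φ.halfEdgesOver E', (φ.mu x : ℚ) * g (φ.f x) := by
  rw [← Finset.sum_fiberwise_of_maps_to (g := φ.f) (t := E')
    (fun x hx => (Finset.mem_filter.mp hx).2.2)]
  refine Finset.sum_congr rfl fun f' hf' => ?_
  rw [φ.mE_eq_sum_mu (hE' f' hf'), Nat.cast_sum, Finset.sum_mul]
  refine Finset.sum_congr ?_ fun x hx => by rw [(Finset.mem_filter.mp hx).2]
  ext x
  simp only [halfEdgesOver, Finset.mem_filter, Finset.mem_univ, true_and]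
  constructor
  · rintro ⟨hx, rfl⟩
    exact ⟨⟨hx, hf'⟩, rfl⟩
  · rintro ⟨⟨hx, -⟩, rfl⟩
    exact ⟨hx, rfl⟩

theorem sum_mE_mul_lengthRatio (hsharp : Sharp M) {z : M} (hz : z ≠ 0) (u w : G'.X) :
    ∑ f' ∈ G'.edgesBetween u w, (φ.mE f' : ℚ) * lengthRatio z (G'.l f') =
      ∑ x ∈ φ.halfEdgesOver (G'.edgesBetween u w), lengthRatio z (G.l x) := by
  rw [φ.sum_mE_mul fun f' hf' => (mem_edgesBetween.mp hf').1]
  refine Finset.sum_congr rfl fun x hx => ?_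
  obtain ⟨hx, hfx⟩ := (Finset.mem_filter.mp hx).2
  exact φ.mu_mul_lengthRatio hsharp hz hx (mem_edgesBetween.mp hfx).1

theorem i_mem_halfEdgesOver {u w : G'.X} (huw : u ≠ w) {x : G.X}
    (hx : x ∈ φ.halfEdgesOver (G'.edgesBetween u w)) :
    G.i x ∈ φ.halfEdgesOver (G'.edgesBetween w u) := by
  simp only [halfEdgesOver, Finset.mem_filter, Finset.mem_univ, true_and, mem_edgesBetween,
    isHalfEdge_i_iff] at hx ⊢
  obtain ⟨hx, hfx, rfl, rfl⟩ := hx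
  obtain ⟨hr, hri, -⟩ := φ.edge x hx hfx
  have hfix : G'.IsHalfEdge (φ.f (G.i x)) := by
    intro hv
    obtain ⟨h₁, h₂⟩ := φ.contr (G.i x) (isHalfEdge_i_iff.mpr hx) hv
    rw [G.i_invol] at h₂
    exact huw (by rw [← hr, ← hri, h₁, h₂])
  obtain ⟨hr', hri', -⟩ := φ.edge (G.i x) (isHalfEdge_i_iff.mpr hx) hfix
  rw [G.i_invol] at hri'
  exact ⟨hx, hfix, by rw [← hr', hri], by rw [← hri', hr]⟩

theorem sum_halfEdgesOver_edgesBetween_swap {β : Type*} [AddCommMonoid β] {u w : G'.X}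
    (huw : u ≠ w) (g : G.X → β) :
    ∑ x ∈ φ.halfEdgesOver (G'.edgesBetween w u), g x =
      ∑ x ∈ φ.halfEdgesOver (G'.edgesBetween u w), g (G.i x) :=
  Finset.sum_nbij' G.i G.i (fun _ => φ.i_mem_halfEdgesOver huw.symm)
    (fun _ => φ.i_mem_halfEdgesOver huw) (fun x _ => G.i_invol x) (fun x _ => G.i_invol x)
    (fun x _ => by rw [G.i_invol])

theorem sum_edgesBetween_mE_mul (hφ : φ.Harmonic) {a : G'.X} (ha : G'.IsHalfEdge a)
    (w : G'.X) (g : G'.X → ℚ) :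
    ∑ f' ∈ G'.edgesBetween (G'.r a) w, (φ.mE f' : ℚ) * g f' =
      φ.mE a * ∑ f' ∈ G'.edgesBetween (G'.r a) w, g f' := by
  rw [Finset.mul_sum]
  refine Finset.sum_congr rfl fun f' hf' => ?_
  obtain ⟨hf, hr, -⟩ := mem_edgesBetween.mp hf'
  rw [φ.mE_eq_of_r_eq hφ hf ha hr]

theorem mE_i (hsharp : Sharp M) (hφ : φ.Harmonic) {e' : G'.X} (he' : G'.IsHalfEdge e') :
    φ.mE (G'.i e') = φ.mE e' := by
  set u := G'.r e'
  set w := G'.r (G'.i e')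
  have hie' : G'.IsHalfEdge (G'.i e') := isHalfEdge_i_iff.mpr he'
  by_cases huw : u = w
  · exact (φ.mE_eq_of_r_eq hφ he' hie' huw).symm
  set z := G'.l e'
  have hz : z ≠ 0 := he'.l_ne_zero
  set S := ∑ f' ∈ G'.edgesBetween u w, lengthRatio z (G'.l f')
  have hS : 0 < S := by
    refine Finset.sum_pos' (fun _ _ => lengthRatio_nonneg _ _) ⟨e', ?_, ?_⟩
    · exact mem_edgesBetween.mpr ⟨he', rfl, rfl⟩
    · rw [lengthRatio_self hsharp hz]
      exact one_pos
  have hS' : ∑ f' ∈ G'.edgesBetween w u, lengthRatio z (G'.l f') = S := by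
    simp only [sum_edgesBetween_swap u w, G'.l_i, S]
  have key : (φ.mE (G'.i e') : ℚ) * S = φ.mE e' * S := calc
    _ = ∑ f' ∈ G'.edgesBetween w u, (φ.mE f' : ℚ) * lengthRatio z (G'.l f') := by
      rw [← hS', φ.sum_edgesBetween_mE_mul hφ hie']
    _ = ∑ x ∈ φ.halfEdgesOver (G'.edgesBetween w u), lengthRatio z (G.l x) :=
      φ.sum_mE_mul_lengthRatio hsharp hz w u
    _ = ∑ x ∈ φ.halfEdgesOver (G'.edgesBetween u w), lengthRatio z (G.l x) := by
      simp only [φ.sum_halfEdgesOver_edgesBetween_swap huw, G.l_i]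
    _ = ∑ f' ∈ G'.edgesBetween u w, (φ.mE f' : ℚ) * lengthRatio z (G'.l f') :=
      (φ.sum_mE_mul_lengthRatio hsharp hz u w).symm
    _ = φ.mE e' * S := φ.sum_edgesBetween_mE_mul hφ he' w _
  exact_mod_cast mul_right_cancel₀ hS.ne' key

theorem mE_eq_of_connected (hsharp : Sharp M) (hφ : φ.Harmonic) (hG' : G'.IsConnected)
    {e' f' : G'.X} (he' : G'.IsHalfEdge e') (hf' : G'.IsHalfEdge f') : φ.mE e' = φ.mE f' := by
  suffices h : ∀ v', Relation.ReflTransGen G'.Adj (G'.rv e') v' →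
      ∀ g', G'.IsHalfEdge g' → G'.rv g' = v' → φ.mE e' = φ.mE g' from
    h _ (hG'.2 _ _) f' hf' rfl
  intro v' hpath
  induction hpath with
  | refl => exact fun g' hg' hr => φ.mE_eq_of_r_eq hφ he' hg' (congrArg Subtype.val hr).symm
  | tail _ hadj ih =>
    obtain ⟨y, hy, hry, hriy⟩ := hadj
    intro g' hg' hr
    rw [ih y hy hry, ← φ.mE_i hsharp hφ hy]
    exact φ.mE_eq_of_r_eq hφ (isHalfEdge_i_iff.mpr hy) hg'
      (congrArg Subtype.val (hriy.trans hr.symm))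

theorem deg_eq_mE (hsharp : Sharp M) (hφ : φ.Harmonic) (hG' : G'.IsConnected) {e' : G'.X}
    (he' : G'.IsHalfEdge e') : φ.deg = φ.mE e' := by
  have hH : ∃ e', G'.IsHalfEdge e' := ⟨e', he'⟩
  rw [deg, dif_pos hH]
  exact φ.mE_eq_of_connected hsharp hφ hG' hH.choose_spec he'

theorem mV_eq_multAt (hφ : φ.Harmonic) {e' : G'.X} (he' : G'.IsHalfEdge e') {v : G.V}
    (hv : G'.r e' = φ.f v.val) : φ.mV v = φ.multAt v e' := by
  have h : ∃ f', G'.IsHalfEdge f' ∧ G'.r f' = φ.f v.val := ⟨e', he', hv⟩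
  rw [mV, dif_pos h]
  exact hφ v _ e' h.choose_spec.1 he' h.choose_spec.2 hv

theorem sum_mV_fiber_eq_deg (hsharp : Sharp M) (hφ : φ.Harmonic) (hG' : G'.IsConnected)
    (v' : G'.V) : ∑ v with φ.vmap v = v', φ.mV v = φ.deg := by
  by_cases hH : ∃ e', G'.IsHalfEdge e'
  · obtain ⟨e', he', hr⟩ := exists_isHalfEdge_r_eq hG' hH v'
    have hfiber : ∀ v : G.V, φ.vmap v = v' ↔ φ.f v.val = G'.r e' := by
      intro v
      rw [hr, Subtype.ext_iff]
      rfl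
    rw [φ.deg_eq_mE hsharp hφ hG' he', mE, ← Finset.sum_filter]
    refine Finset.sum_congr (by simp only [hfiber]) fun v hv => ?_
    exact φ.mV_eq_multAt hφ he' (Finset.mem_filter.mp hv).2.symm
  · have hmV : ∀ v, φ.mV v = 0 := fun v => dif_neg fun ⟨e', he', _⟩ => hH ⟨e', he'⟩
    simp only [hmV, Finset.sum_const_zero, deg, dif_neg hH]

end MGraph.Hom

theorem MGraph.Hom.degD_pullback_general (M : Type) [AddCancelCommMonoid M] (hsharp : Sharp M)
    (G G' : MGraph M) (hG' : G'.IsConnected)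
    (φ : MGraph.Hom G G') (hφ : φ.Harmonic) (D' : G'.V → ℤ) :
    G.degD (φ.pullback D') = (φ.deg : ℤ) * G'.degD D' := by
  calc G.degD (φ.pullback D')
      = ∑ v', ∑ v with φ.vmap v = v', D' (φ.vmap v) * (φ.mV v : ℤ) :=
        (Finset.sum_fiberwise _ φ.vmap _).symm
    _ = ∑ v', D' v' * (φ.deg : ℤ) := by
        refine Finset.sum_congr rfl fun v' _ => ?_
        rw [← φ.sum_mV_fiber_eq_deg hsharp hφ hG' v', Nat.cast_sum, Finset.mul_sum]
        exact Finset.sum_congr rfl fun v hv => by rw [(Finset.mem_filter.mp hv).2]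
    _ = (φ.deg : ℤ) * G'.degD D' := by
        rw [degD, Finset.mul_sum]
        exact Finset.sum_congr rfl fun _ _ => mul_comm _ _

/-- For a harmonic morphism `φ : Γ → Γ'` of `M`-metrised graphs and a divisor `D'` on
`Γ'`, one has `deg(φ*(D')) = deg(φ) · deg(D')`. -/
theorem MGraph.Hom.degD_pullback (M : Type) [AddCancelCommMonoid M] (hsharp : Sharp M)
    (G G' : MGraph M) (hG : G.IsConnected) (hG' : G'.IsConnected)
    (φ : MGraph.Hom G G') (hφ : φ.Harmonic) (D' : G'.V → ℤ) :
    G.degD (φ.pullback D') = (φ.deg : ℤ) * G'.degD D' :=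
  MGraph.Hom.degD_pullback_general M hsharp G G' hG' φ hφ D'

end
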